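/- arXiv:1404.4428 — 2 statements merged into one kernel-verified Lean document; each statement's English description precedes it below -/
import Mathlib

section
/- Let d and n be positive integers, m an integer with gcd(m, n) = 1, and ε ∈ {1, -1}. Then S(ε + d·n·m, d·n²) = ε·(2/(d·n²) + d − 3), where S(m,n) = 12·s(m,n) is the normalized Dedekind sum. -/
/-!
For `a` coprime to `N`, the terms `0 < k < N` of `s(a, N)` are `(k/N - 1/2) (σ k/N - 1/2)` with
`σ k = a k mod N` a permutation of `[0, N)`. Polarization therefore gives
`s(a, N) = s(1, N) - ∑ₖ (σ k - k)² / (2 N²)`, and `s(1, N) = (N - 1)(N - 2) / (12 N)`.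

For `a = 1 + d n m` and `N = d n²`, write `k = r + n q` with `0 ≤ r < n`, `0 ≤ q < d n`.
Then `σ k = r + n ((q + d c) mod d n)` with `c = m r mod n`: on each residue class `σ` is a
rotation by `d c`, contributing `n² · d n · d c · (d n - d c)` to the sum of squares. As
`r ↦ m r mod n` permutes `[0, n)`, the total is `d³ n⁴ (n² - 1) / 6`, i.e.
`s(1 + d n m, d n²) = s(1, d n²) - d (n² - 1) / 12`.
The sign `ε = -1` follows from `s(-a, N) = -s(a, N)`.
-/

open scoped Classical
open Finset

/-- The sawtooth function `((x))`. -/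
noncomputable def saw (x : ℝ) : ℝ :=
  if ∃ z : ℤ, (z : ℝ) = x then 0 else x - ⌊x⌋ - 1/2

/-- The classical Dedekind sum `s(m,n)`. -/
noncomputable def ded (m n : ℤ) : ℝ :=
  ∑ k ∈ Finset.Icc (1 : ℤ) n, saw ((k : ℝ) / n) * saw ((m : ℝ) * k / n)

/-- The normalized Dedekind sum `S(m,n) = 12 s(m,n)`. -/
noncomputable def Sded (m n : ℤ) : ℝ := 12 * ded m n

lemma saw_intCast (z : ℤ) : saw z = 0 := if_pos ⟨z, rfl⟩

lemma saw_neg (x : ℝ) : saw (-x) = -saw x := by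
  by_cases hx : ∃ z : ℤ, (z : ℝ) = x
  · obtain ⟨z, rfl⟩ := hx
    simp [← Int.cast_neg, saw_intCast]
  · have hx' : ¬∃ z : ℤ, (z : ℝ) = -x := fun ⟨z, hz⟩ => hx ⟨-z, by push_cast; linarith⟩
    have hfloor : ⌊-x⌋ = -⌊x⌋ - 1 := by
      rw [Int.floor_eq_iff]
      have hlt : (⌊x⌋ : ℝ) < x := (Int.floor_le x).lt_of_ne fun h => hx ⟨_, h⟩
      push_cast
      constructor <;> linarith [Int.lt_floor_add_one x]
    simp only [saw, if_neg hx, if_neg hx', hfloor]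
    push_cast
    ring

lemma saw_intCast_div {j N : ℤ} (hN : 0 < N) (hj : ¬N ∣ j) :
    saw (j / N) = (j % N : ℤ) / N - 1 / 2 := by
  have hnot : ¬∃ z : ℤ, (z : ℝ) = j / N := by
    rintro ⟨z, hz⟩
    refine hj ⟨z, ?_⟩
    have : (N : ℝ) ≠ 0 := by exact_mod_cast hN.ne'
    rw [eq_div_iff this] at hz
    exact_mod_cast (by linarith : (j : ℝ) = N * z)
  rw [saw, if_neg hnot, Int.self_sub_floor]
  lift N to ℕ using hN.le
  rw [Int.cast_natCast, Int.fract_div_intCast_eq_div_intCast_mod]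

lemma ded_neg (a N : ℤ) : ded (-a) N = -ded a N := by
  rw [ded, ded, ← sum_neg_distrib]
  refine sum_congr rfl fun k _ => ?_
  rw [Int.cast_neg, neg_mul, neg_div, saw_neg, mul_neg]

lemma sum_comp_mul_emod {M : Type*} [AddCommMonoid M] {a N : ℤ} (ha : IsCoprime a N)
    (f : ℤ → M) : ∑ k ∈ Ico 0 N, f (a * k % N) = ∑ k ∈ Ico 0 N, f k := by
  rcases le_or_gt N 0 with hN | hN
  · simp [Ico_eq_empty_of_le hN]
  have hmaps : ∀ k ∈ Ico 0 N, a * k % N ∈ Ico 0 N := fun k _ =>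
    mem_Ico.2 ⟨Int.emod_nonneg _ hN.ne', Int.emod_lt_of_pos _ hN⟩
  have hinj : Set.InjOn (fun k => a * k % N) (Ico 0 N : Set ℤ) := by
    intro k hk l hl hkl
    simp only [coe_Ico, Set.mem_Ico] at hk hl
    have hdvd : N ∣ a * (k - l) := by
      rw [mul_sub]; exact Int.ModEq.dvd hkl.symm
    obtain ⟨c, hc⟩ := ha.symm.dvd_of_dvd_mul_left hdvd
    have : c = 0 := by nlinarith
    linarith [this ▸ hc]
  exact sum_nbij (g := f) _ hmaps hinj (surjOn_of_injOn_of_card_le _ hmaps hinj le_rfl)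
    fun _ _ => rfl

lemma ded_eq_sum_Ico {a N : ℤ} (hN : 0 < N) (ha : IsCoprime a N) :
    ded a N = ∑ k ∈ Ico 0 N, ((k : ℝ) / N - 1 / 2) * ((a * k % N : ℤ) / N - 1 / 2) - 1 / 4 := by
  have hIcc : Icc 1 N = insert N (Ioo 0 N) := by
    rw [Ioo_insert_right hN]; ext k; simp only [mem_Icc, mem_Ioc]; omega
  have hN' : (N : ℝ) ≠ 0 := by exact_mod_cast hN.ne'
  have hterm : ∀ k ∈ Ioo 0 N, saw ((k : ℝ) / N) * saw ((a : ℝ) * k / N)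
      = ((k : ℝ) / N - 1 / 2) * ((a * k % N : ℤ) / N - 1 / 2) := by
    intro k hk
    obtain ⟨hk0, hkN⟩ := mem_Ioo.1 hk
    have hndvd : ¬N ∣ k := fun h => hk0.ne' (Int.eq_zero_of_dvd_of_nonneg_of_lt hk0.le hkN h)
    rw [saw_intCast_div hN hndvd, ← Int.cast_mul,
      saw_intCast_div hN fun h => hndvd (ha.symm.dvd_of_dvd_mul_left h),
      Int.emod_eq_of_lt hk0.le hkN]
  rw [ded, hIcc, ← Ioo_insert_left hN, sum_insert (by simp), sum_insert (by simp),
    sum_congr rfl hterm, div_self hN', ← Int.cast_one, saw_intCast]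
  norm_num

lemma ded_one_eq_sum_Ico {N : ℤ} (hN : 0 < N) :
    ded 1 N = ∑ k ∈ Ico 0 N, ((k : ℝ) / N - 1 / 2) ^ 2 - 1 / 4 := by
  rw [ded_eq_sum_Ico hN isCoprime_one_left]
  congr 1
  refine sum_congr rfl fun k hk => ?_
  rw [one_mul, Int.emod_eq_of_lt (mem_Ico.1 hk).1 (mem_Ico.1 hk).2, sq]

lemma ded_eq_ded_one_sub {a N : ℤ} (hN : 0 < N) (ha : IsCoprime a N) :
    ded a N = ded 1 N - (∑ k ∈ Ico 0 N, ((a * k % N - k : ℤ) : ℝ) ^ 2) / (2 * N ^ 2) := by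
  have hN' : (N : ℝ) ≠ 0 := by exact_mod_cast hN.ne'
  have hsq : ∑ k ∈ Ico 0 N, ((a * k % N : ℤ) / (N : ℝ) - 1 / 2) ^ 2
      = ∑ k ∈ Ico 0 N, ((k : ℝ) / N - 1 / 2) ^ 2 :=
    sum_comp_mul_emod ha fun j : ℤ => ((j : ℝ) / N - 1 / 2) ^ 2
  have hpolar : ∀ k ∈ Ico 0 N, ((k : ℝ) / N - 1 / 2) * ((a * k % N : ℤ) / N - 1 / 2)
      = (((k : ℝ) / N - 1 / 2) ^ 2 + ((a * k % N : ℤ) / (N : ℝ) - 1 / 2) ^ 2) / 2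
        - ((a * k % N - k : ℤ) : ℝ) ^ 2 / (2 * N ^ 2) := by
    intro k _
    push_cast
    field_simp
    ring
  rw [ded_eq_sum_Ico hN ha, ded_one_eq_sum_Ico hN, sum_congr rfl hpolar, sum_sub_distrib,
    ← sum_div, ← sum_div, sum_add_distrib, hsq]
  ring

lemma sum_Ico_zero_add_one {M : Type*} [AddCommMonoid M] (f : ℤ → M) {N : ℤ} (hN : 0 ≤ N) :
    ∑ k ∈ Ico 0 (N + 1), f k = ∑ k ∈ Ico 0 N, f k + f N := by
  rw [Ico_add_one_right_eq_Icc, ← Ico_insert_right hN, sum_insert right_notMem_Ico, add_comm]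

lemma two_mul_sum_Ico_id {N : ℤ} (hN : 0 ≤ N) : 2 * ∑ k ∈ Ico 0 N, k = N * (N - 1) := by
  induction N, hN using Int.leInduction with
  | base => simp
  | succ N hN ih => rw [sum_Ico_zero_add_one _ hN, mul_add, ih]; ring

lemma six_mul_sum_Ico_sq {N : ℤ} (hN : 0 ≤ N) :
    6 * ∑ k ∈ Ico 0 N, k ^ 2 = N * (N - 1) * (2 * N - 1) := by
  induction N, hN using Int.leInduction with
  | base => simp
  | succ N hN ih => rw [sum_Ico_zero_add_one _ hN, mul_add, ih]; ring

lemma ded_one {N : ℤ} (hN : 0 < N) : ded 1 N = (N - 1) * (N - 2) / (12 * N) := by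
  have hN' : (N : ℝ) ≠ 0 := by exact_mod_cast hN.ne'
  have hid : ∑ k ∈ Ico 0 N, (k : ℝ) = N * (N - 1) / 2 := by
    have h := congrArg (Int.cast : ℤ → ℝ) (two_mul_sum_Ico_id hN.le)
    push_cast at h
    linarith
  have hsq : ∑ k ∈ Ico 0 N, (k : ℝ) ^ 2 = N * (N - 1) * (2 * N - 1) / 6 := by
    have h := congrArg (Int.cast : ℤ → ℝ) (six_mul_sum_Ico_sq hN.le)
    push_cast at h
    linarith
  have hcard : ((Ico 0 N).card : ℝ) = N := by
    rw [Int.card_Ico, sub_zero, ← Int.cast_natCast, Int.toNat_of_nonneg hN.le]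
  have hexpand : ∑ k ∈ Ico 0 N, ((k : ℝ) / N - 1 / 2) ^ 2
      = (∑ k ∈ Ico 0 N, (k : ℝ) ^ 2) / N ^ 2 - (∑ k ∈ Ico 0 N, (k : ℝ)) / N
        + (Ico 0 N).card / 4 := by
    rw [sum_div, sum_div, ← sum_sub_distrib, div_eq_mul_one_div _ (4 : ℝ), ← nsmul_eq_mul,
      ← sum_const, ← sum_add_distrib]
    refine sum_congr rfl fun k _ => ?_
    field_simp
    ring
  rw [ded_one_eq_sum_Ico hN, hexpand, hcard, hid, hsq]
  field_simp
  ring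

lemma sum_Ico_mul_eq_sum_sum {M : Type*} [AddCommMonoid M] (g : ℤ → M) {n : ℤ} (hn : 0 < n)
    (L : ℤ) : ∑ k ∈ Ico 0 (n * L), g k = ∑ r ∈ Ico 0 n, ∑ q ∈ Ico 0 L, g (r + n * q) := by
  rw [← sum_product']
  symm
  refine sum_nbij' (fun p => p.1 + n * p.2) (fun k => (k % n, k / n)) ?_ ?_ ?_ ?_ fun _ _ => rfl
  · rintro ⟨r, q⟩ h
    simp only [mem_product, mem_Ico] at h ⊢
    constructor <;> nlinarith
  · intro k hk
    simp only [mem_product, mem_Ico] at hk ⊢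
    exact ⟨⟨Int.emod_nonneg _ hn.ne', Int.emod_lt_of_pos _ hn⟩,
      Int.ediv_nonneg hk.1 hn.le, Int.ediv_lt_of_lt_mul hn (mul_comm n L ▸ hk.2)⟩
  · rintro ⟨r, q⟩ h
    simp only [mem_product, mem_Ico] at h
    simp only [Int.add_mul_emod_self_left, Int.emod_eq_of_lt h.1.1 h.1.2,
      Int.add_mul_ediv_left _ _ hn.ne', Int.ediv_eq_zero_of_lt h.1.1 h.1.2, zero_add]
  · intro k _
    exact Int.emod_add_mul_ediv k n

lemma sum_sq_add_emod_sub {s L : ℤ} (hs : 0 ≤ s) (hsL : s ≤ L) :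
    ∑ q ∈ Ico 0 L, ((q + s) % L - q) ^ 2 = L * s * (L - s) := by
  rw [← Ico_union_Ico_eq_Ico (by omega : (0 : ℤ) ≤ L - s) (by omega : L - s ≤ L),
    sum_union (Ico_disjoint_Ico_consecutive _ _ _)]
  have hlow : ∀ q ∈ Ico 0 (L - s), ((q + s) % L - q) ^ 2 = s ^ 2 := by
    intro q hq
    obtain ⟨h0, h1⟩ := mem_Ico.1 hq
    rw [Int.emod_eq_of_lt (by omega) (by omega)]
    ring
  have hhigh : ∀ q ∈ Ico (L - s) L, ((q + s) % L - q) ^ 2 = (L - s) ^ 2 := by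
    intro q hq
    obtain ⟨h0, h1⟩ := mem_Ico.1 hq
    rw [← Int.sub_emod_right, Int.emod_eq_of_lt (by omega) (by omega)]
    ring
  rw [sum_congr rfl hlow, sum_congr rfl hhigh, sum_const, sum_const, Int.card_Ico, Int.card_Ico,
    nsmul_eq_mul, nsmul_eq_mul, Int.toNat_of_nonneg (by omega), Int.toNat_of_nonneg (by omega)]
  ring

lemma add_mul_emod_mul {r n x L : ℤ} (hr : 0 ≤ r) (hrn : r < n) (hL : 0 < L) :
    (r + n * x) % (n * L) = r + n * (x % L) := by
  have hx := Int.emod_add_mul_ediv x L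
  have h0 := Int.emod_nonneg x hL.ne'
  have h1 := Int.emod_lt_of_pos x hL
  have hsplit : r + n * x = r + n * (x % L) + n * L * (x / L) := by linear_combination (-n) * hx
  rw [hsplit, Int.add_mul_emod_self_left, Int.emod_eq_of_lt (by nlinarith) (by nlinarith)]

lemma one_add_mul_mul_emod {d n r : ℤ} (hd : 0 < d) (hn : 0 < n) (hr : 0 ≤ r) (hrn : r < n)
    (m q : ℤ) :
    (1 + d * n * m) * (r + n * q) % (d * n ^ 2) = r + n * ((q + d * (m * r % n)) % (d * n)) := by
  have hmr := Int.emod_add_mul_ediv (m * r) n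
  have hsplit : (1 + d * n * m) * (r + n * q)
      = r + n * (q + d * (m * r % n)) + n * (d * n) * (m * q + m * r / n) := by
    linear_combination (-(d * n)) * hmr
  rw [hsplit, show d * n ^ 2 = n * (d * n) by ring, Int.add_mul_emod_self_left,
    add_mul_emod_mul hr hrn (by positivity)]

lemma six_mul_sum_Ico_mul_sub {n : ℤ} (hn : 0 ≤ n) :
    6 * ∑ c ∈ Ico 0 n, c * (n - c) = n * (n ^ 2 - 1) := by
  have hid := two_mul_sum_Ico_id hn
  have hsq := six_mul_sum_Ico_sq hn
  simp only [mul_sub, sum_sub_distrib, ← sum_mul, ← sq]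
  linear_combination 3 * n * hid - hsq

lemma six_mul_sum_sq_one_add_mul_emod_sub {d n m : ℤ} (hd : 0 < d) (hn : 0 < n)
    (hm : IsCoprime m n) :
    6 * ∑ k ∈ Ico 0 (d * n ^ 2), ((1 + d * n * m) * k % (d * n ^ 2) - k) ^ 2
      = d ^ 3 * n ^ 4 * (n ^ 2 - 1) := by
  have hinner : ∀ r ∈ Ico 0 n, ∑ q ∈ Ico 0 (d * n),
      ((1 + d * n * m) * (r + n * q) % (d * n ^ 2) - (r + n * q)) ^ 2
        = d ^ 3 * n ^ 3 * ((m * r % n) * (n - m * r % n)) := by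
    intro r hr
    obtain ⟨hr0, hrn⟩ := mem_Ico.1 hr
    have hc0 := Int.emod_nonneg (m * r) hn.ne'
    have hcn := Int.emod_lt_of_pos (m * r) hn
    calc ∑ q ∈ Ico 0 (d * n), ((1 + d * n * m) * (r + n * q) % (d * n ^ 2) - (r + n * q)) ^ 2
        = ∑ q ∈ Ico 0 (d * n), n ^ 2 * ((q + d * (m * r % n)) % (d * n) - q) ^ 2 := by
          refine sum_congr rfl fun q _ => ?_
          rw [one_add_mul_mul_emod hd hn hr0 hrn]
          ring
      _ = n ^ 2 * (d * n * (d * (m * r % n)) * (d * n - d * (m * r % n))) := by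
          rw [← mul_sum, sum_sq_add_emod_sub (by positivity) (by nlinarith)]
      _ = d ^ 3 * n ^ 3 * ((m * r % n) * (n - m * r % n)) := by ring
  rw [show Ico 0 (d * n ^ 2) = Ico 0 (n * (d * n)) by ring_nf, sum_Ico_mul_eq_sum_sum _ hn,
    sum_congr rfl hinner, ← mul_sum,
    sum_comp_mul_emod hm fun c => c * (n - c)]
  linear_combination d ^ 3 * n ^ 3 * six_mul_sum_Ico_mul_sub hn.le

lemma ded_one_add_mul {d n m : ℤ} (hd : 0 < d) (hn : 0 < n) (hm : IsCoprime m n) :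
    ded (1 + d * n * m) (d * n ^ 2) = ded 1 (d * n ^ 2) - d * (n ^ 2 - 1) / 12 := by
  have hcop : IsCoprime (1 + d * n * m) (d * n ^ 2) := by
    have h : IsCoprime (1 + d * n * m) (d * n) := ⟨1, -m, by ring⟩
    rw [show d * n ^ 2 = d * n * n by ring]
    exact h.mul_right h.of_mul_right_right
  have hsum : ∑ k ∈ Ico 0 (d * n ^ 2), (((1 + d * n * m) * k % (d * n ^ 2) - k : ℤ) : ℝ) ^ 2
      = d ^ 3 * n ^ 4 * (n ^ 2 - 1) / 6 := by
    rw [eq_div_iff (by norm_num), mul_comm]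
    exact_mod_cast six_mul_sum_sq_one_add_mul_emod_sub hd hn hm
  have hd' : (d : ℝ) ≠ 0 := by exact_mod_cast hd.ne'
  have hn' : (n : ℝ) ≠ 0 := by exact_mod_cast hn.ne'
  rw [ded_eq_ded_one_sub (by positivity) hcop, hsum]
  push_cast
  field_simp
  ring

lemma Sded_neg (a N : ℤ) : Sded (-a) N = -Sded a N := by
  rw [Sded, Sded, ded_neg, mul_neg]

lemma Sded_one_add_mul {d n m : ℤ} (hd : 0 < d) (hn : 0 < n) (hm : IsCoprime m n) :
    Sded (1 + d * n * m) (d * n ^ 2) = 2 / ((d : ℝ) * n ^ 2) + d - 3 := by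
  have hd' : (d : ℝ) ≠ 0 := by exact_mod_cast hd.ne'
  have hn' : (n : ℝ) ≠ 0 := by exact_mod_cast hn.ne'
  rw [Sded, ded_one_add_mul hd hn hm, ded_one (by positivity)]
  push_cast
  field_simp
  ring

theorem rademacher_power (d n : ℤ) (hd : 0 < d) (hn : 0 < n) (m : ℤ)
    (hm : Int.gcd m n = 1) (ε : ℤ) (hε : ε = 1 ∨ ε = -1) :
    Sded (ε + d * n * m) (d * n ^ 2) =
      (ε : ℝ) * (2 / ((d : ℝ) * (n : ℝ) ^ 2) + (d : ℝ) - 3) := by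
  have hcop : IsCoprime m n := Int.isCoprime_iff_gcd_eq_one.2 hm
  rcases hε with rfl | rfl
  · rw [Sded_one_add_mul hd hn hcop, Int.cast_one, one_mul]
  · rw [show -1 + d * n * m = -(1 + d * n * (-m)) by ring, Sded_neg,
      Sded_one_add_mul hd hn hcop.neg_left, Int.cast_neg, Int.cast_one, neg_one_mul]
end

section
/- For any prime p ≥ 5, there exist integers m₁, m₂ with 0 ≤ m₁, m₂ < p², gcd(m₁, p) = gcd(m₂, p) = 1, m₁ ≢ m₂ (mod p²), m₁·m₂ ≢ 1 (mod p²), and S(m₁, p²) = S(m₂, p²). -/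
open scoped Classical
open Finset

/-!
Write a residue mod `N²` in base `N` as `a + N b`. Since `(kN + 1)(a + N b) ≡ a + N (b + k a)`
mod `N²` and, for `a ≠ 0`, `((a + N b)/N²)) = b/N + (a/N² - 1/2)`, the inner sum over `b` in
`s(kN + 1, N²)` is a function of `a` plus a function `Y` of the shift `k a`. When `k` is prime to
`N`, `a ↦ k a` permutes the residues fixing `0`, so the sum of `Y (k a)` does not depend on `k`.
Hence `s(kN + 1, N²)` is the same for all such `k`; take `k = 1, 2` and `N = p`.
-/

lemma saw_add_intCast (x : ℝ) (z : ℤ) : saw (x + z) = saw x := by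
  have hint : (∃ w : ℤ, (w : ℝ) = x + z) ↔ ∃ w : ℤ, (w : ℝ) = x :=
    ⟨fun ⟨w, hw⟩ => ⟨w - z, by push_cast; linarith⟩,
      fun ⟨w, hw⟩ => ⟨w + z, by push_cast; linarith⟩⟩
  simp only [saw, hint, Int.floor_add_intCast]
  split_ifs <;> push_cast <;> ring

lemma saw_of_mem_Ioo {x : ℝ} (h0 : 0 < x) (h1 : x < 1) : saw x = x - 1 / 2 := by
  have hnot : ¬ ∃ z : ℤ, (z : ℝ) = x := by
    rintro ⟨z, rfl⟩
    have : (0 : ℤ) < z := by exact_mod_cast h0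
    have : z < 1 := by exact_mod_cast h1
    omega
  simp [saw, hnot, Int.floor_eq_zero_iff.mpr ⟨h0.le, h1⟩]

noncomputable def sawMod (n : ℕ) (x : ZMod n) : ℝ := saw (x.val / n)

lemma saw_intCast_div_s15 (n : ℕ) [NeZero n] (j : ℤ) : saw (j / n) = sawMod n j := by
  have hn : (n : ℝ) ≠ 0 := Nat.cast_ne_zero.mpr (NeZero.ne n)
  have hj : (j : ℝ) = (j : ZMod n).val + n * (j / (n : ℤ) : ℤ) := by
    have := Int.emod_add_mul_ediv j n
    rw [← ZMod.val_intCast] at this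
    exact_mod_cast this.symm
  rw [sawMod, hj, add_div, mul_div_cancel_left₀ _ hn, saw_add_intCast]

lemma sum_Icc_intCast {M : Type*} [AddCommMonoid M] (n : ℕ) [NeZero n] (f : ZMod n → M) :
    ∑ j ∈ Icc (1 : ℤ) n, f j = ∑ x : ZMod n, f x := by
  refine sum_nbij (fun j : ℤ => (j : ZMod n)) (by simp) ?_ ?_ fun _ _ => rfl
  · intro i hi j hj hij
    simp only [coe_Icc, Set.mem_Icc] at hi hj
    rw [ZMod.intCast_eq_intCast_iff_dvd_sub] at hij
    have := Int.eq_zero_of_abs_lt_dvd hij (abs_lt.mpr ⟨by omega, by omega⟩)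
    omega
  · intro x _
    by_cases hx : x = 0
    · exact ⟨n, by simp [NeZero.one_le], by simp [hx]⟩
    · refine ⟨x.val, ?_, by simp⟩
      have := ZMod.val_pos.mpr hx
      have := x.val_lt
      simp only [coe_Icc, Set.mem_Icc]
      omega

lemma ded_eq_sum_zmod (m : ℤ) (n : ℕ) [NeZero n] :
    ded m n = ∑ x : ZMod n, sawMod n x * sawMod n (m * x) := by
  rw [ded, ← sum_Icc_intCast n]
  refine sum_congr rfl fun j _ => ?_
  rw [Int.cast_natCast, saw_intCast_div_s15, ← Int.cast_mul, saw_intCast_div_s15]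
  push_cast
  rfl

section Digits

variable {N : ℕ} [NeZero N]

def digits (a b : ZMod N) : ZMod (N ^ 2) := a.val + N * b.val

lemma val_add_mul_val_lt (a b : ZMod N) : a.val + N * b.val < N ^ 2 := by
  have := a.val_lt
  have := b.val_lt
  nlinarith

lemma val_digits (a b : ZMod N) : (digits a b).val = a.val + N * b.val := by
  rw [digits, ← Nat.cast_mul, ← Nat.cast_add, ZMod.val_cast_of_lt (val_add_mul_val_lt a b)]

lemma digits_bijective : Function.Bijective fun ab : ZMod N × ZMod N => digits ab.1 ab.2 := by
  refine (Fintype.bijective_iff_injective_and_card _).mpr ⟨?_, by simp [ZMod.card, sq]⟩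
  rintro ⟨a, b⟩ ⟨a', b'⟩ h
  have hv := congrArg ZMod.val h
  simp only [val_digits] at hv
  have ha : a.val = a'.val := by
    simpa [Nat.add_mul_mod_self_left, Nat.mod_eq_of_lt a.val_lt, Nat.mod_eq_of_lt a'.val_lt]
      using congrArg (· % N) hv
  have hb : b.val = b'.val := Nat.eq_of_mul_eq_mul_left (NeZero.pos N) (by omega)
  rw [ZMod.val_injective N ha, ZMod.val_injective N hb]

lemma sum_zmod_sq {M : Type*} [AddCommMonoid M] (f : ZMod (N ^ 2) → M) :
    ∑ x, f x = ∑ a : ZMod N, ∑ b : ZMod N, f (digits a b) := by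
  rw [← Fintype.sum_prod_type']
  exact (Fintype.sum_bijective _ digits_bijective _ _ fun _ => rfl).symm

lemma natCast_mul_val_eq_of_intCast_eq {x : ZMod N} {t : ℤ} (h : (t : ZMod N) = x) :
    (N : ZMod (N ^ 2)) * x.val = N * t := by
  have hN2 : (N : ZMod (N ^ 2)) ^ 2 = 0 := by rw [← Nat.cast_pow, ZMod.natCast_self]
  have hval : (x.val : ℤ) = t - N * (t / N) := by rw [← h, ZMod.val_intCast, Int.emod_def]
  rw [← Int.cast_natCast x.val, hval]
  push_cast
  linear_combination (-(t / N : ℤ) : ZMod (N ^ 2)) * hN2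

lemma intCast_mul_add_one_mul_digits (k : ℤ) (a b : ZMod N) :
    ((k * N + 1 : ℤ) : ZMod (N ^ 2)) * digits a b = digits a (b + k * a) := by
  have hN2 : (N : ZMod (N ^ 2)) ^ 2 = 0 := by rw [← Nat.cast_pow, ZMod.natCast_self]
  rw [digits, digits, natCast_mul_val_eq_of_intCast_eq (x := b + (k : ZMod N) * a) (t := b.val + k * a.val) (by simp)]
  push_cast
  linear_combination ((k : ZMod (N ^ 2)) * b.val) * hN2

lemma sawMod_digits {a : ZMod N} (ha : a ≠ 0) (b : ZMod N) :
    sawMod (N ^ 2) (digits a b) = b.val / N + ((a.val : ℝ) / N ^ 2 - 1 / 2) := by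
  have hN : (0 : ℝ) < N := by exact_mod_cast NeZero.pos N
  have hlt : (a.val + N * b.val : ℝ) < N ^ 2 := by exact_mod_cast val_add_mul_val_lt a b
  have hpos : (0 : ℝ) < a.val := by exact_mod_cast ZMod.val_pos.mpr ha
  rw [sawMod, val_digits, saw_of_mem_Ioo (by push_cast; positivity)
    (by push_cast; rw [div_lt_one (by positivity)]; exact hlt)]
  push_cast
  field_simp
  ring

end Digits

lemma sum_add_const_mul_shift_add_const {G R : Type*} [AddCommGroup G] [Fintype G] [CommRing R]
    (f : G → R) (e : R) (c : G) :
    ∑ b, (f b + e) * (f (b + c) + e)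
      = ∑ b, f b * f (b + c) + (2 * e * ∑ b, f b + Fintype.card G * e ^ 2) := by
  have hshift : ∑ b, f (b + c) = ∑ b, f b := Equiv.sum_comp (Equiv.addRight c) f
  simp only [mul_add, add_mul, sum_add_distrib, ← mul_sum, ← sum_mul, hshift, sum_const,
    card_univ, nsmul_eq_mul]
  ring

lemma sum_apply_units_mul {R M : Type*} [MonoidWithZero R] [Fintype R] [AddCommGroup M]
    {T : R → R → M} (X Y : R → M) (hT : ∀ a ≠ 0, ∀ c, T a c = X a + Y c) (u : Rˣ) :
    ∑ a, T a (u * a) = ∑ a, X a + ∑ a, Y a + (T 0 0 - X 0 - Y 0) := by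
  have hY : ∑ a, Y (u * a) = ∑ a, Y a := Equiv.sum_comp (Units.mulLeft u) Y
  have hcorr : ∑ a, (T a (u * a) - X a - Y (u * a)) = T 0 0 - X 0 - Y 0 := by
    rw [Fintype.sum_eq_single 0 fun a ha => by rw [hT a ha]; abel, mul_zero]
  rw [← hY, ← hcorr, ← sum_add_distrib, ← sum_add_distrib]
  exact sum_congr rfl fun a _ => by abel

lemma ded_mul_add_one_sq (N : ℕ) [NeZero N] (k : ℤ) :
    ded (k * N + 1) ((N : ℤ) ^ 2) = ∑ a : ZMod N, ∑ b : ZMod N,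
      sawMod (N ^ 2) (digits a b) * sawMod (N ^ 2) (digits a (b + k * a)) := by
  rw [show (N : ℤ) ^ 2 = (N ^ 2 : ℕ) by push_cast; rfl, ded_eq_sum_zmod, sum_zmod_sq]
  simp only [intCast_mul_add_one_mul_digits]

theorem ded_mul_add_one_sq_eq (N : ℕ) [NeZero N] {k l : ℤ} (hk : IsCoprime k N)
    (hl : IsCoprime l N) : ded (k * N + 1) ((N : ℤ) ^ 2) = ded (l * N + 1) ((N : ℤ) ^ 2) := by
  set e : ZMod N → ℝ := fun a => (a.val : ℝ) / N ^ 2 - 1 / 2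
  have hsep : ∀ a ≠ (0 : ZMod N), ∀ c,
      ∑ b, sawMod (N ^ 2) (digits a b) * sawMod (N ^ 2) (digits a (b + c))
        = (2 * e a * ∑ b : ZMod N, (b.val : ℝ) / N + N * e a ^ 2)
          + ∑ b : ZMod N, (b.val : ℝ) / N * ((b + c).val / N) := by
    intro a ha c
    simp only [sawMod_digits ha]
    rw [sum_add_const_mul_shift_add_const (fun b : ZMod N => (b.val : ℝ) / N), ZMod.card, add_comm]
  rw [ded_mul_add_one_sq, ded_mul_add_one_sq,
    ← ZMod.coe_unitOfIsCoprime k hk, ← ZMod.coe_unitOfIsCoprime l hl,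
    sum_apply_units_mul _ _ hsep, sum_apply_units_mul _ _ hsep]

theorem nonobvious_equality_p_sq (p : ℕ) (hp : p.Prime) (hge : 5 ≤ p) :
    ∃ m₁ m₂ : ℤ, 0 ≤ m₁ ∧ m₁ < (p : ℤ) ^ 2 ∧ 0 ≤ m₂ ∧ m₂ < (p : ℤ) ^ 2 ∧
      Int.gcd m₁ (p : ℤ) = 1 ∧ Int.gcd m₂ (p : ℤ) = 1 ∧
      ¬ m₁ ≡ m₂ [ZMOD (p : ℤ) ^ 2] ∧ ¬ m₁ * m₂ ≡ 1 [ZMOD (p : ℤ) ^ 2] ∧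
      Sded m₁ ((p : ℤ) ^ 2) = Sded m₂ ((p : ℤ) ^ 2) := by
  have : NeZero p := ⟨hp.ne_zero⟩
  have h5 : (5 : ℤ) ≤ p := by exact_mod_cast hge
  have hcop2 : IsCoprime (2 : ℤ) p := by
    rw [Int.isCoprime_iff_gcd_eq_one]
    exact_mod_cast (Nat.coprime_primes Nat.prime_two hp).mpr (by omega)
  refine ⟨p + 1, 2 * p + 1, by omega, by nlinarith, by omega, by nlinarith,
    Int.isCoprime_iff_gcd_eq_one.mp ⟨1, -1, by ring⟩,
    Int.isCoprime_iff_gcd_eq_one.mp ⟨1, -2, by ring⟩, fun h => ?_, fun h => ?_, ?_⟩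
  · rw [Int.ModEq, Int.emod_eq_of_lt (by omega) (by nlinarith),
      Int.emod_eq_of_lt (by omega) (by nlinarith)] at h
    omega
  · rw [Int.ModEq, show ((p : ℤ) + 1) * (2 * p + 1) = 3 * p + 1 + p ^ 2 * 2 by ring,
      Int.add_mul_emod_self_left, Int.emod_eq_of_lt (by omega) (by nlinarith),
      Int.emod_eq_of_lt (by omega) (by nlinarith)] at h
    omega
  · simpa [Sded] using ded_mul_add_one_sq_eq p isCoprime_one_left hcop2
end
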